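/- arXiv:1101.1519 — 2 statements merged into one kernel-verified Lean document; each statement's English description precedes it below -/
import Mathlib

section
/- Let D ≥ 2, n ≥ 1, 1 ≤ r ≤ n, r ≤ k ≤ 2n. Let m_1, …, m_r be nonzero elements of ℤ_D, set M = diag(m_1,…,m_r), and let Z₁ (r×r), Z₂ ((k−r)×r), Z₃ (r×(n−r)), Z₄ ((k−r)×(n−r)) be matrices over ℤ_D. Define k Pauli products g_1, …, g_k on n qudits by: for 1 ≤ i ≤ r, g_i = X^{m_i e_i} Z^{(i-th row of (Z₁|Z₃))}; for r < i ≤ k, g_i = Z^{((i−r)-th row of (Z₂|Z₄))}. Then g_1, …, g_k pairwise commute if and only if Z₁ M = M Z₁ᵀ mod D and Z₂ M = 0 mod D. -/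
open Matrix

/-- ω = exp(2πi/D), a primitive D-th root of unity. -/
noncomputable def omegaD (D : ℕ) : ℂ := Complex.exp (2 * Real.pi * Complex.I / D)

/-- The single-qudit Pauli operator Z = Σ_j ω^j |j⟩⟨j| on ℂ^D. -/
noncomputable def Zmat (D : ℕ) : Matrix (ZMod D) (ZMod D) ℂ :=
  Matrix.of fun j k => if k = j then omegaD D ^ j.val else 0

/-- The single-qudit Pauli operator X = Σ_j |j⟩⟨j+1| on ℂ^D (index arithmetic mod D). -/
noncomputable def Xmat (D : ℕ) : Matrix (ZMod D) (ZMod D) ℂ :=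
  Matrix.of fun j k => if k = j + 1 then (1 : ℂ) else 0

/-- The n-fold Kronecker product X^x Z^z = (X^{x_1}Z^{z_1}) ⊗ ⋯ ⊗ (X^{x_n}Z^{z_n}),
written entrywise on the index set (Fin n → ZMod D) ≃ (ZMod D)^n of size D^n. -/
noncomputable def XZ (D n : ℕ) [NeZero D] (x z : Fin n → ZMod D) :
    Matrix (Fin n → ZMod D) (Fin n → ZMod D) ℂ :=
  Matrix.of fun j k => ∏ i, (Xmat D ^ (x i).val * Zmat D ^ (z i).val) (j i) (k i)

/-- A Pauli product ω^λ X^x Z^z on n qudits. -/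
def IsPauli (D n : ℕ) [NeZero D] (M : Matrix (Fin n → ZMod D) (Fin n → ZMod D) ℂ) : Prop :=
  ∃ (lam : ZMod D) (x z : Fin n → ZMod D), M = omegaD D ^ lam.val • XZ D n x z

/-!
Entrywise, `X^x Z^z` sends `|k⟩` to `|k - x⟩` with phase `ω^{k·z}`, so the two orderings of a
product of Pauli products differ exactly by the phase `ω^{x·z' - x'·z}`; since `ω` is a primitive
`D`-th root of unity they commute iff `x·z' = x'·z` in `ℤ_D`. The X-part of `g_i` is `m_i e_i` for
`i ≤ r` and zero otherwise, so this symplectic product of `g_i` and `g_{i'}` is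
`m_i (z_{i'})_i - m_{i'} (z_i)_{i'}` (with `m_i := 0` for `i > r`), and splitting according to
whether `i, i' ≤ r` gives the two conditions.
-/

lemma omegaD_isPrimitiveRoot (D : ℕ) [NeZero D] : IsPrimitiveRoot (omegaD D) D :=
  Complex.isPrimitiveRoot_exp D (NeZero.ne D)

lemma omegaD_pow_eq_pow_iff (D : ℕ) [NeZero D] (a b : ℕ) :
    omegaD D ^ a = omegaD D ^ b ↔ (a : ZMod D) = b := by
  have h := omegaD_isPrimitiveRoot D
  rw [(h.isOfFinOrder (NeZero.ne D)).pow_eq_pow_iff_modEq, ← h.eq_orderOf,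
    ZMod.natCast_eq_natCast_iff]

lemma Zmat_eq_diagonal (D : ℕ) : Zmat D = diagonal fun j => omegaD D ^ j.val := by
  ext j k
  simp [Zmat, diagonal_apply, eq_comm]

lemma Xmat_pow_apply (D : ℕ) [NeZero D] (a : ℕ) (j k : ZMod D) :
    (Xmat D ^ a) j k = if k = j + a then 1 else 0 := by
  induction a generalizing k with
  | zero => simp [one_apply, eq_comm]
  | succ a ih =>
    rw [pow_succ, mul_apply]
    simp only [ih]
    simp only [Xmat, of_apply, ite_mul, one_mul, zero_mul]
    rw [Finset.sum_ite_eq' Finset.univ (j + a)]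
    simp [add_assoc]

lemma Xmat_pow_mul_Zmat_pow_apply (D : ℕ) [NeZero D] (a b : ℕ) (j k : ZMod D) :
    (Xmat D ^ a * Zmat D ^ b) j k = if k = j + a then omegaD D ^ (k.val * b) else 0 := by
  rw [Zmat_eq_diagonal, diagonal_pow, mul_diagonal, Xmat_pow_apply]
  simp [pow_mul]

lemma XZ_apply (D n : ℕ) [NeZero D] (x z j k : Fin n → ZMod D) :
    XZ D n x z j k = if k = j + x then omegaD D ^ ∑ i, (k i).val * (z i).val else 0 := by
  simp only [XZ, of_apply, Xmat_pow_mul_Zmat_pow_apply, ZMod.natCast_val, ZMod.cast_id',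
    id, Fintype.prod_ite_zero, Finset.prod_pow_eq_pow_sum, funext_iff, Pi.add_apply]

lemma XZ_mul_apply (D n : ℕ) [NeZero D] (x z x' z' j k : Fin n → ZMod D) :
    (XZ D n x z * XZ D n x' z') j k =
      if k = j + x + x' then
        omegaD D ^ ((∑ i, (j i + x i).val * (z i).val) + ∑ i, (k i).val * (z' i).val)
      else 0 := by
  simp only [mul_apply, XZ_apply, ite_mul, zero_mul]
  rw [Finset.sum_ite_eq' Finset.univ (j + x)]
  simp only [Finset.mem_univ, if_true, mul_ite, mul_zero, Pi.add_apply, pow_add]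

lemma XZ_mul_comm_iff (D n : ℕ) [NeZero D] (x z x' z' : Fin n → ZMod D) :
    XZ D n x z * XZ D n x' z' = XZ D n x' z' * XZ D n x z ↔
      ∑ i, x i * z' i = ∑ i, x' i * z i := by
  have hshift : ∀ j : Fin n → ZMod D, j + x + x' = j + x' + x := fun j => add_right_comm _ _ _
  have hphase : ∀ j : Fin n → ZMod D,
      (XZ D n x z * XZ D n x' z') j (j + x + x') = (XZ D n x' z' * XZ D n x z) j (j + x + x') ↔
        ∑ i, x i * z' i = ∑ i, x' i * z i := by
    intro j
    rw [XZ_mul_apply, XZ_mul_apply, if_pos rfl, if_pos (hshift j), omegaD_pow_eq_pow_iff]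
    push_cast [ZMod.natCast_val, ZMod.cast_id', id]
    simp only [Pi.add_apply, add_mul, Finset.sum_add_distrib]
    constructor <;> intro h <;> linear_combination h
  constructor
  · intro h
    exact (hphase 0).1 (by rw [h])
  · intro h
    ext j k
    by_cases hk : k = j + x + x'
    · subst hk
      exact (hphase j).2 h
    · rw [XZ_mul_apply, XZ_mul_apply, if_neg hk, if_neg (by rwa [← hshift])]

lemma Fin.sum_ite_and_val_eq_mul {R : Type*} [NonUnitalNonAssocSemiring R] {n : ℕ} (p : Prop)
    [Decidable p] (a : ℕ) (ha : p → a < n) (c : R) (v : Fin n → R) :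
    ∑ j : Fin n, (if p ∧ j.val = a then c else 0) * v j =
      if h : p then c * v ⟨a, ha h⟩ else 0 := by
  split_ifs with hp
  · refine (Finset.sum_eq_single_of_mem ⟨a, ha hp⟩ (Finset.mem_univ _) fun j _ hj => ?_).trans
      (by rw [if_pos ⟨hp, rfl⟩])
    rw [if_neg fun h => hj (Fin.ext h.2), zero_mul]
  · exact Finset.sum_eq_zero fun j _ => by rw [if_neg (fun h => hp h.1), zero_mul]

lemma forall_dite_mul_eq_dite_mul_iff {R : Type*} [CommMonoidWithZero R] {n k r : ℕ}
    (hrn : r ≤ n) (hrk : r ≤ k) (m : ℕ → R) (zv : Fin k → Fin n → R) :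
    (∀ i i' : Fin k,
      (if h : i.val < r then m i.val * zv i' ⟨i.val, lt_of_lt_of_le h hrn⟩ else 0) =
        if h : i'.val < r then m i'.val * zv i ⟨i'.val, lt_of_lt_of_le h hrn⟩ else 0) ↔
      ((∀ (a b : ℕ) (ha : a < r) (hb : b < r),
          zv ⟨a, lt_of_lt_of_le ha hrk⟩ ⟨b, lt_of_lt_of_le hb hrn⟩ * m b =
            m a * zv ⟨b, lt_of_lt_of_le hb hrk⟩ ⟨a, lt_of_lt_of_le ha hrn⟩) ∧
        (∀ (i : Fin k), r ≤ i.val → ∀ (b : ℕ) (hb : b < r),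
          zv i ⟨b, lt_of_lt_of_le hb hrn⟩ * m b = 0)) := by
  constructor
  · intro H
    refine ⟨fun a b ha hb => ?_, fun i hi b hb => ?_⟩
    · have h := H ⟨a, lt_of_lt_of_le ha hrk⟩ ⟨b, lt_of_lt_of_le hb hrk⟩
      rw [dif_pos ha, dif_pos hb] at h
      rw [mul_comm, ← h, mul_comm]
    · have h := H ⟨b, lt_of_lt_of_le hb hrk⟩ i
      rw [dif_pos hb, dif_neg (not_lt.2 hi)] at h
      rw [mul_comm, h]
  · rintro ⟨hdiag, hoff⟩ i i'
    rcases lt_or_ge i.val r with hi | hi <;> rcases lt_or_ge i'.val r with hi' | hi'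
    · rw [dif_pos hi, dif_pos hi', mul_comm, hdiag i' i hi' hi, mul_comm]
    · rw [dif_pos hi, dif_neg (not_lt.2 hi'), mul_comm, hoff i' hi' i hi]
    · rw [dif_neg (not_lt.2 hi), dif_pos hi', mul_comm, hoff i hi i' hi']
    · rw [dif_neg (not_lt.2 hi), dif_neg (not_lt.2 hi')]

theorem stmt_15_general (D n k r : ℕ) [NeZero D]
    (hrn : r ≤ n) (hrk : r ≤ k)
    (m : ℕ → ZMod D)
    (zv : Fin k → Fin n → ZMod D)
    (g : Fin k → Matrix (Fin n → ZMod D) (Fin n → ZMod D) ℂ)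
    (hg : ∀ i : Fin k, g i =
      XZ D n (fun j => if i.val < r ∧ j.val = i.val then m i.val else 0) (zv i)) :
    (∀ i i' : Fin k, g i * g i' = g i' * g i) ↔
      ((∀ (a b : ℕ) (ha : a < r) (hb : b < r),
          zv ⟨a, lt_of_lt_of_le ha hrk⟩ ⟨b, lt_of_lt_of_le hb hrn⟩ * m b =
            m a * zv ⟨b, lt_of_lt_of_le hb hrk⟩ ⟨a, lt_of_lt_of_le ha hrn⟩) ∧
        (∀ (i : Fin k), r ≤ i.val → ∀ (b : ℕ) (hb : b < r),
          zv i ⟨b, lt_of_lt_of_le hb hrn⟩ * m b = 0)) := by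
  rw [← forall_dite_mul_eq_dite_mul_iff hrn hrk]
  refine forall₂_congr fun i i' => ?_
  rw [hg, hg, XZ_mul_comm_iff,
    Fin.sum_ite_and_val_eq_mul _ _ (fun h => lt_of_lt_of_le h hrn),
    Fin.sum_ite_and_val_eq_mul _ _ (fun h => lt_of_lt_of_le h hrn)]

/-- Commutation of standard-form generators: the Pauli products g₁,…,g_k with X-block
(M | 0), M = diag(m₁,…,m_r), and Z-block (Z₁ Z₃ ; Z₂ Z₄) pairwise commute if and only
if Z₁M = MZ₁ᵀ mod D and Z₂M = 0 mod D. -/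
theorem stmt_15 (D n k r : ℕ) [NeZero D] (hD : 2 ≤ D) (hn : 1 ≤ n)
    (hr1 : 1 ≤ r) (hrn : r ≤ n) (hrk : r ≤ k) (hk : k ≤ 2 * n)
    (m : ℕ → ZMod D) (hm : ∀ i < r, m i ≠ 0)
    (zv : Fin k → Fin n → ZMod D)
    (g : Fin k → Matrix (Fin n → ZMod D) (Fin n → ZMod D) ℂ)
    (hg : ∀ i : Fin k, g i =
      XZ D n (fun j => if i.val < r ∧ j.val = i.val then m i.val else 0) (zv i)) :
    (∀ i i' : Fin k, g i * g i' = g i' * g i) ↔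
      ((∀ (a b : ℕ) (ha : a < r) (hb : b < r),
          zv ⟨a, lt_of_lt_of_le ha hrk⟩ ⟨b, lt_of_lt_of_le hb hrn⟩ * m b =
            m a * zv ⟨b, lt_of_lt_of_le hb hrk⟩ ⟨a, lt_of_lt_of_le ha hrn⟩) ∧
        (∀ (i : Fin k), r ≤ i.val → ∀ (b : ℕ) (hb : b < r),
          zv i ⟨b, lt_of_lt_of_le hb hrn⟩ * m b = 0)) :=
  stmt_15_general D n k r hrn hrk m zv g hg
end

section
/- Let D ≥ 2 and n ≥ 1 be integers, S a subgroup of the n-qudit Pauli group P_n, and C = {ψ ∈ ℂ^{D^n} : sψ = ψ for all s ∈ S} with K = dim C ≥ 1. Then both K and |S| divide D^n. -/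
open Matrix

/-- The common fixed subspace C = {ψ : sψ = ψ for all s ∈ S} of a group S of
(invertible) matrices. -/
noncomputable def fixedSpace (D n : ℕ) [NeZero D]
    (S : Subgroup (Matrix (Fin n → ZMod D) (Fin n → ZMod D) ℂ)ˣ) :
    Submodule ℂ ((Fin n → ZMod D) → ℂ) where
  carrier := {ψ | ∀ s ∈ S, (s : Matrix (Fin n → ZMod D) (Fin n → ZMod D) ℂ) *ᵥ ψ = ψ}
  add_mem' := by
    intro a b ha hb s hs
    rw [Matrix.mulVec_add, ha s hs, hb s hs]
  zero_mem' := by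
    intro s hs
    rw [Matrix.mulVec_zero]
  smul_mem' := by
    intro c a ha s hs
    rw [Matrix.mulVec_smul, ha s hs]

/-! Averaging over the finite group `S` projects onto `C`, so `|S| · K = ∑_{s ∈ S} tr s`.
A Pauli product `ω^λ X^x Z^z` is traceless unless `x = z = 0`, and a scalar `ω^λ ≠ 1` fixes no
nonzero vector; since `C ≠ 0`, only `s = 1` contributes, giving `|S| · K = tr 1 = D^n`. -/

section MatrixGroup

variable {k ι : Type*} [Field k] [Fintype ι] [DecidableEq ι]

noncomputable def Subgroup.matrixRepresentation (G : Subgroup (Matrix ι ι k)ˣ) :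
    Representation k G (ι → k) :=
  (Matrix.toLinAlgEquiv' : Matrix ι ι k ≃ₐ[k] _).toMonoidHom.comp
    ((Units.coeHom _).comp G.subtype)

theorem Subgroup.mem_invariants_matrixRepresentation {G : Subgroup (Matrix ι ι k)ˣ}
    {v : ι → k} :
    v ∈ G.matrixRepresentation.invariants ↔ ∀ g ∈ G, (g : Matrix ι ι k) *ᵥ v = v := by
  simp [Representation.mem_invariants, Subgroup.matrixRepresentation, Matrix.toLinAlgEquiv'_apply]

theorem Subgroup.sum_trace_eq_card_mul_finrank_invariants [CharZero k]
    (G : Subgroup (Matrix ι ι k)ˣ) [Fintype G] :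
    ∑ g : G, trace ((g : (Matrix ι ι k)ˣ) : Matrix ι ι k) =
      Nat.card G * Module.finrank k G.matrixRepresentation.invariants := by
  have hcard : (Nat.card G : k) ≠ 0 := Nat.cast_ne_zero.mpr Nat.card_pos.ne'
  have := invertibleOfNonzero hcard
  rw [← G.matrixRepresentation.card_inv_mul_sum_char_eq_finrank, mul_inv_cancel_left₀ hcard]
  exact Finset.sum_congr rfl fun g _ => (Matrix.trace_toLin'_eq _).symm

end MatrixGroup

theorem omegaD_pow_val (D : ℕ) [NeZero D] (a : ZMod D) :
    omegaD D ^ a.val = ZMod.stdAddChar a := by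
  rw [ZMod.stdAddChar_apply, ZMod.toCircle_apply, omegaD, ← Complex.exp_nat_mul]
  congr 1
  ring

theorem Zmat_eq_diagonal_s16 (D : ℕ) [NeZero D] : Zmat D = diagonal ZMod.stdAddChar := by
  ext j k
  simp [Zmat, diagonal, eq_comm, omegaD_pow_val]

theorem Xmat_pow (D : ℕ) [NeZero D] (m : ℕ) :
    Xmat D ^ m = Matrix.of fun j k => if k = j + (m : ZMod D) then (1 : ℂ) else 0 := by
  induction m with
  | zero =>
    ext j k
    simp [one_apply, eq_comm]
  | succ m ih =>
    ext j k
    rw [pow_succ, ih]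
    simp only [mul_apply, Xmat, of_apply, ite_mul, one_mul, zero_mul]
    rw [Finset.sum_ite_eq' Finset.univ (j + (m : ZMod D))]
    simp [add_assoc]

theorem sum_stdAddChar_pow (D : ℕ) [NeZero D] (b : ZMod D) :
    ∑ j : ZMod D, ZMod.stdAddChar j ^ b.val = if b = 0 then (D : ℂ) else 0 := by
  have hshift : ∀ j : ZMod D, ZMod.stdAddChar j ^ b.val = ZMod.stdAddChar.mulShift b j := by
    intro j
    rw [← AddChar.mulShift_spec', ZMod.natCast_zmod_val]
  have hprimitive : ZMod.stdAddChar.mulShift b = 0 ↔ b = 0 :=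
    ⟨fun h => by_contra fun hb => ZMod.isPrimitive_stdAddChar D hb h,
      fun h => h ▸ AddChar.mulShift_zero _⟩
  classical
  simp only [hshift, AddChar.sum_eq_ite, hprimitive, ZMod.card]

theorem trace_Xmat_pow_mul_Zmat_pow (D : ℕ) [NeZero D] (a b : ZMod D) :
    trace (Xmat D ^ a.val * Zmat D ^ b.val) = if a = 0 ∧ b = 0 then (D : ℂ) else 0 := by
  have hdiag : ∀ j : ZMod D, (Xmat D ^ a.val) j j = if a = 0 then 1 else 0 := by
    intro j
    simp [Xmat_pow, eq_comm (a := j)]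
  simp only [trace, diag, Zmat_eq_diagonal_s16, diagonal_pow, mul_diagonal, Pi.pow_apply, hdiag]
  by_cases ha : a = 0 <;> simp [ha, sum_stdAddChar_pow]

theorem XZ_zero (D n : ℕ) [NeZero D] : XZ D n 0 0 = 1 := by
  ext j k
  simp only [XZ, of_apply, Pi.zero_apply, ZMod.val_zero, pow_zero, one_mul, one_apply,
    Finset.prod_boole]
  simp [funext_iff]

theorem trace_XZ (D n : ℕ) [NeZero D] (x z : Fin n → ZMod D) :
    trace (XZ D n x z) = if x = 0 ∧ z = 0 then (D : ℂ) ^ n else 0 := by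
  have hprod : trace (XZ D n x z) = ∏ i, trace (Xmat D ^ (x i).val * Zmat D ^ (z i).val) :=
    (Fintype.prod_sum fun i a => (Xmat D ^ (x i).val * Zmat D ^ (z i).val) a a).symm
  simp only [hprod, trace_Xmat_pow_mul_Zmat_pow, Finset.prod_ite_zero, Finset.prod_const,
    Finset.card_univ, Fintype.card_fin, Finset.mem_univ, true_imp_iff, funext_iff, forall_and,
    Pi.zero_apply]

theorem setOf_isPauli_finite (D n : ℕ) [NeZero D] : {M | IsPauli D n M}.Finite :=
  (Set.finite_range fun p : ZMod D × (Fin n → ZMod D) × (Fin n → ZMod D) =>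
    omegaD D ^ p.1.val • XZ D n p.2.1 p.2.2).subset
      fun _ ⟨lam, x, z, h⟩ => ⟨(lam, x, z), h.symm⟩

theorem IsPauli.trace_eq_zero_of_mulVec_eq_self {D n : ℕ} [NeZero D]
    {M : Matrix (Fin n → ZMod D) (Fin n → ZMod D) ℂ} (hM : IsPauli D n M) (hM1 : M ≠ 1)
    {ψ : (Fin n → ZMod D) → ℂ} (hψ : M *ᵥ ψ = ψ) (hψ0 : ψ ≠ 0) : trace M = 0 := by
  obtain ⟨lam, x, z, rfl⟩ := hM
  rw [trace_smul, trace_XZ]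
  split_ifs with hxz
  · obtain ⟨rfl, rfl⟩ := hxz
    rw [XZ_zero, smul_mulVec, one_mulVec] at hψ
    have hphase : omegaD D ^ lam.val = 1 :=
      smul_left_injective ℂ hψ0 (hψ.trans (one_smul ℂ ψ).symm)
    rw [XZ_zero, hphase, one_smul] at hM1
    exact absurd rfl hM1
  · exact smul_zero _

theorem fixedSpace_eq_invariants (D n : ℕ) [NeZero D]
    (S : Subgroup (Matrix (Fin n → ZMod D) (Fin n → ZMod D) ℂ)ˣ) :
    fixedSpace D n S = S.matrixRepresentation.invariants :=
  Submodule.ext fun _ => Subgroup.mem_invariants_matrixRepresentation.symm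

theorem finite_of_forall_isPauli {D n : ℕ} [NeZero D]
    {S : Subgroup (Matrix (Fin n → ZMod D) (Fin n → ZMod D) ℂ)ˣ}
    (hS : ∀ s ∈ S, IsPauli D n (s : Matrix (Fin n → ZMod D) (Fin n → ZMod D) ℂ)) :
    Finite S :=
  have := (setOf_isPauli_finite D n).to_subtype
  Finite.of_injective (fun s : S => (⟨s.1, hS s s.2⟩ : {M | IsPauli D n M}))
    fun _ _ h => Subtype.ext (Units.ext (congrArg Subtype.val h))

theorem sum_trace_eq_pow_of_fixedSpace_ne_bot {D n : ℕ} [NeZero D]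
    {S : Subgroup (Matrix (Fin n → ZMod D) (Fin n → ZMod D) ℂ)ˣ} [Fintype S]
    (hS : ∀ s ∈ S, IsPauli D n (s : Matrix (Fin n → ZMod D) (Fin n → ZMod D) ℂ))
    (hC : fixedSpace D n S ≠ ⊥) :
    ∑ s : S, trace ((s : (Matrix (Fin n → ZMod D) (Fin n → ZMod D) ℂ)ˣ) :
      Matrix (Fin n → ZMod D) (Fin n → ZMod D) ℂ) = (D : ℂ) ^ n := by
  obtain ⟨ψ, hψ, hψ0⟩ := (Submodule.ne_bot_iff _).mp hC
  rw [Fintype.sum_eq_single (1 : S) fun s hs => (hS s s.2).trace_eq_zero_of_mulVec_eq_self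
    (fun h => hs (Subtype.ext (Units.ext h))) (hψ s s.2) hψ0]
  simp [ZMod.card]

theorem stmt_16_general (D n : ℕ) [NeZero D]
    (S : Subgroup (Matrix (Fin n → ZMod D) (Fin n → ZMod D) ℂ)ˣ)
    (hS : ∀ s ∈ S, IsPauli D n (s : Matrix (Fin n → ZMod D) (Fin n → ZMod D) ℂ))
    (hK : 1 ≤ Module.finrank ℂ (fixedSpace D n S)) :
    Module.finrank ℂ (fixedSpace D n S) ∣ D ^ n ∧ Nat.card S ∣ D ^ n := by
  have := finite_of_forall_isPauli hS
  have := Fintype.ofFinite S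
  have hC : fixedSpace D n S ≠ ⊥ := Submodule.one_le_finrank_iff.mp hK
  have hcount : Nat.card S * Module.finrank ℂ (fixedSpace D n S) = D ^ n := by
    rw [fixedSpace_eq_invariants]
    exact_mod_cast (S.sum_trace_eq_card_mul_finrank_invariants).symm.trans
      (sum_trace_eq_pow_of_fixedSpace_ne_bot hS hC)
  exact ⟨Dvd.intro_left _ hcount, Dvd.intro _ hcount⟩

/-- Both the code dimension K and the stabilizer size |S| divide D^n. -/
theorem stmt_16 (D n : ℕ) [NeZero D] (hD : 2 ≤ D) (hn : 1 ≤ n)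
    (S : Subgroup (Matrix (Fin n → ZMod D) (Fin n → ZMod D) ℂ)ˣ)
    (hS : ∀ s ∈ S, IsPauli D n (s : Matrix (Fin n → ZMod D) (Fin n → ZMod D) ℂ))
    (hK : 1 ≤ Module.finrank ℂ (fixedSpace D n S)) :
    Module.finrank ℂ (fixedSpace D n S) ∣ D ^ n ∧ Nat.card S ∣ D ^ n :=
  stmt_16_general D n S hS hK
end
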